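/- Let the discrete-time LTI system x(k+1) = A x(k) + B u(k), y(k) = C x(k) with A ∈ ℝ^{n×n}, B ∈ ℝ^{n×q}, C ∈ ℝ^{p×n} have (A, B) controllable. Let (u^d, y^d) be a length-T input/output trajectory of the system and let L ≥ 1. If u^d is L-Page exciting of order n + 1, then for every length-L input/output trajectory (u, y) of the system there exists a vector g ∈ ℝ^{⌊T/L⌋} such that 𝓟_L(u^d) g = col(u) and 𝓟_L(y^d) g = col(y). -/

import Mathlib

open Matrix

/-- The block Page matrix of depth `k` of a signal `ω : {0,…,T−1} → ℝ^q`: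
its `(i,j)` block entry (for `i < k`, `j < ⌊T/k⌋`) is the vector `ω(jk+i) ∈ ℝ^q`. -/
noncomputable def pageMat {q : ℕ} (T : ℕ) (ω : Fin T → Fin q → ℝ) (k : ℕ) :
    Matrix (Fin k × Fin q) (Fin (T / k)) ℝ := fun r c =>
  if h : (c : ℕ) * k + (r.1 : ℕ) < T then ω ⟨(c : ℕ) * k + (r.1 : ℕ), h⟩ r.2 else 0

/-- The vertical stacking of the depth-`k` block Page matrices of the shifted signals
`ω(·+rk)` for `r = 0,…,l−1`, each truncated to its first `⌊T/k⌋−l+1` columns: its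
`((r,i),j)` block entry is `ω((j+r)k + i)`. -/
noncomputable def pageStackMat {q : ℕ} (T : ℕ) (ω : Fin T → Fin q → ℝ) (k l : ℕ) :
    Matrix (Fin l × Fin k × Fin q) (Fin (T / k - l + 1)) ℝ := fun r c =>
  if h : ((c : ℕ) + (r.1 : ℕ)) * k + (r.2.1 : ℕ) < T then
    ω ⟨((c : ℕ) + (r.1 : ℕ)) * k + (r.2.1 : ℕ), h⟩ r.2.2
  else 0

/-- A signal is `k`-Page exciting of order `l` if the stacked Page matrix
has full row rank `q·k·l`. -/
def PageExciting {q : ℕ} (T : ℕ) (ω : Fin T → Fin q → ℝ) (k l : ℕ) : Prop :=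
  (pageStackMat T ω k l).rank = q * k * l

/-- The controllability matrix `[B, AB, …, A^{n−1}B]`. -/
noncomputable def ctrbMat {n : ℕ} {ι : Type} [Fintype ι]
    (A : Matrix (Fin n) (Fin n) ℝ) (B : Matrix (Fin n) ι ℝ) :
    Matrix (Fin n) (Fin n × ι) ℝ :=
  Matrix.of fun i p => (A ^ (p.1 : ℕ) * B) i p.2

/-- The pair `(A, B)` is controllable if the controllability matrix has rank `n`. -/
def Controllable {n : ℕ} {ι : Type} [Fintype ι]
    (A : Matrix (Fin n) (Fin n) ℝ) (B : Matrix (Fin n) ι ℝ) : Prop :=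
  (ctrbMat A B).rank = n

/-- `(u, y)` is a length-`L` input/output trajectory of the LTI system
`x(k+1) = A x(k) + B u(k)`, `y(k) = C x(k)`. -/
def IsTraj {n q p : ℕ} (A : Matrix (Fin n) (Fin n) ℝ) (B : Matrix (Fin n) (Fin q) ℝ)
    (C : Matrix (Fin p) (Fin n) ℝ) (L : ℕ)
    (u : Fin L → Fin q → ℝ) (y : Fin L → Fin p → ℝ) : Prop :=
  ∃ x : Fin (L + 1) → Fin n → ℝ,
    ∀ k : Fin L, x k.succ = A *ᵥ x k.castSucc + B *ᵥ u k ∧ y k = C *ᵥ x k.castSucc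

/-- `col(u)`: the column vector obtained by stacking `u(0), …, u(L−1)`. -/
def colVec {L q : ℕ} (u : Fin L → Fin q → ℝ) : Fin L × Fin q → ℝ := fun r => u r.1 r.2

/-!
Sampling the system every `L` steps gives the lifted system
`z (j + 1) = A ^ L z j + [A^{L-1}B, …, B] v j` with `z j = x (j L)` and `v j` the `j`-th block of
`L` inputs. It is controllable when `(A, B)` is, and `L`-Page excitation of order `n + 1` of `u^d`
is persistency of excitation of order `n + 1` of the lifted input, whose values are the columns of
the Page matrix. For the lifted data the matrix stacking the states `x^d (j L)` over the Page
matrix of `u^d` has full row rank: summing `n + 1` shifts of a left-kernel relation `(η, ζ)` with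
the coefficients of the characteristic polynomial of `A ^ L` kills the state term (Cayley–Hamilton)
and leaves a left-kernel vector of the excitation matrix; it vanishes, its last block is `ζ`, and
the others then give `η A^k B = 0` one after the other, so `η = 0` by controllability.
Hence some `g` makes the data reproduce the initial state and the input of `(u, y)`; by
superposition the combined data trajectory then has the state, hence the output, of `(u, y)`.
-/

open Finset

namespace Matrix

variable {K : Type*} [Field K] {m n : Type*} [Fintype m] [Fintype n]

theorem rank_eq_card_iff_vecMul_injective (A : Matrix m n K) :
    A.rank = Fintype.card m ↔ Function.Injective A.vecMul := by
  rw [rank_eq_finrank_span_row, vecMul_injective_iff, linearIndependent_iff_card_eq_finrank_span,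
    eq_comm]
  rfl

theorem mulVec_surjective_of_rank_eq (A : Matrix m n K) (h : A.rank = Fintype.card m) :
    Function.Surjective A.mulVec := by
  have hrange : LinearMap.range A.mulVecLin = ⊤ :=
    Submodule.eq_top_of_finrank_eq (by rwa [Module.finrank_fintype_fun_eq_card])
  exact fun b => LinearMap.range_eq_top.mp hrange b

theorem of_mulVec_eq_sum_smul {R ι κ : Type*} [CommSemiring R] [Fintype κ] (f : κ → ι → R)
    (g : κ → R) :
    (of fun i j => f j i) *ᵥ g = ∑ j, g j • f j := by
  ext i
  simp [mulVec, dotProduct, Finset.sum_apply, mul_comm]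

end Matrix

theorem Finset.sum_range_sum_range_tsub_flip {M : Type*} [AddCommMonoid M] (n : ℕ)
    (f : ℕ → ℕ → M) :
    ∑ k ∈ range (n + 1), ∑ s ∈ range k, f s (k - 1 - s) =
      ∑ s ∈ range (n + 1), ∑ t ∈ range (n - s), f s t := by
  rw [sum_range_succ', sum_range_succ]
  simpa using sum_range_diag_flip n f

theorem Nat.mul_add_lt_of_lt_div {j k L T : ℕ} (hj : j < T / L) (hk : k < L) : j * L + k < T := by
  have := (Nat.le_div_iff_mul_le (by omega)).mp hj
  rw [Nat.succ_mul] at this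
  omega

section Recursion

variable {R : Type*} [CommRing R] {σ ι : Type*} [Fintype σ] [Fintype ι]
  (A : Matrix σ σ R) (B : Matrix σ ι R)

theorem state_eq_pow_mulVec_add_sum [DecidableEq σ] {x : ℕ → σ → R} {u : ℕ → ι → R} (k₀ m : ℕ)
    (hx : ∀ k < m, x (k₀ + k + 1) = A *ᵥ x (k₀ + k) + B *ᵥ u (k₀ + k)) :
    x (k₀ + m) = A ^ m *ᵥ x k₀ + ∑ s ∈ range m, (A ^ (m - 1 - s) * B) *ᵥ u (k₀ + s) := by
  induction m with
  | zero => simp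
  | succ m ih =>
    rw [← add_assoc, hx m m.lt_succ_self, ih fun k hk => hx k (by omega), sum_range_succ,
      mulVec_add, mulVec_mulVec, ← pow_succ', mulVec_sum, add_assoc]
    congr 2
    · refine sum_congr rfl fun s hs => ?_
      rw [mulVec_mulVec, ← Matrix.mul_assoc, ← pow_succ',
        show m - 1 - s + 1 = m + 1 - 1 - s by have := mem_range.mp hs; omega]
    · simp

theorem sum_smul_eq_of_recursion {J : Type*} [Fintype J] (g : J → R) {L : ℕ}
    {xs : J → ℕ → σ → R} {us : J → ℕ → ι → R} {x : ℕ → σ → R} {u : ℕ → ι → R}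
    (hxs : ∀ j, ∀ k < L, xs j (k + 1) = A *ᵥ xs j k + B *ᵥ us j k)
    (hx : ∀ k < L, x (k + 1) = A *ᵥ x k + B *ᵥ u k)
    (h₀ : ∑ j, g j • xs j 0 = x 0) (hu : ∀ k < L, ∑ j, g j • us j k = u k) :
    ∀ k ≤ L, ∑ j, g j • xs j k = x k := by
  intro k hk
  induction k with
  | zero => exact h₀
  | succ k ih =>
    simp only [hxs _ k hk, smul_add, sum_add_distrib, ← mulVec_smul, ← mulVec_sum,
      ih (Nat.le_of_succ_le hk), hu k hk, hx k hk]

end Recursion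

theorem forall_eq_zero_of_sum_range_tsub_smul_eq_zero {R M : Type*} [Semiring R]
    [AddCommMonoid M] [Module R M] {a : ℕ → R} {w : ℕ → M} {n : ℕ} (ha : a n = 1)
    (h : ∀ s < n, ∑ t ∈ range (n - s), a (s + t + 1) • w t = 0) : ∀ m < n, w m = 0 := by
  intro m
  induction m using Nat.strong_induction_on with
  | _ m ih =>
    intro hm
    have hs := h (n - 1 - m) (by omega)
    rw [show n - (n - 1 - m) = m + 1 by omega, sum_range_succ,
      sum_eq_zero fun t ht => by
        have := mem_range.mp ht; rw [ih t this (by omega), smul_zero],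
      show n - 1 - m + m + 1 = n by omega, ha, one_smul, zero_add] at hs
    exact hs

section FundamentalLemma

variable {R : Type*} [CommRing R] [Nontrivial R] {σ ι : Type*} [Fintype σ] [DecidableEq σ]
  [Fintype ι]
  (F : Matrix σ σ R) (G : Matrix σ ι R)

/-- The coefficient of `v (j + s)` in `∑ₖ aₖ (η ⬝ᵥ z (j + k) + ζ ⬝ᵥ v (j + k))`, where `aₖ` are the
coefficients of the characteristic polynomial of `F`, after expanding each `z (j + k)` through the
inputs; by Cayley–Hamilton the contribution of `z j` cancels. -/
noncomputable def charpolyInputCoeff (η : σ → R) (ζ : ι → R) (s : ℕ) : ι → R :=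
  F.charpoly.coeff s • ζ +
    ∑ t ∈ range (Fintype.card σ - s), F.charpoly.coeff (s + t + 1) • η ᵥ* (F ^ t * G)

theorem sum_charpoly_coeff_mul_vecMul_pow_dotProduct (η x : σ → R) :
    ∑ k ∈ range (Fintype.card σ + 1), F.charpoly.coeff k * ((η ᵥ* F ^ k) ⬝ᵥ x) = 0 := by
  have hF := aeval_self_charpoly F
  rw [Polynomial.aeval_eq_sum_range, charpoly_natDegree_eq_dim] at hF
  calc ∑ k ∈ range (Fintype.card σ + 1), F.charpoly.coeff k * ((η ᵥ* F ^ k) ⬝ᵥ x)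
      = (η ᵥ* ∑ k ∈ range (Fintype.card σ + 1), F.charpoly.coeff k • F ^ k) ⬝ᵥ x := by
        simp only [vecMul_sum, sum_dotProduct, vecMul_smul, smul_dotProduct, smul_eq_mul]
    _ = 0 := by rw [hF, vecMul_zero, zero_dotProduct]

variable {F G}

theorem sum_charpolyInputCoeff_dotProduct_eq_zero {N : ℕ} {z : ℕ → σ → R} {v : ℕ → ι → R}
    (hz : ∀ j, j + 1 < N → z (j + 1) = F *ᵥ z j + G *ᵥ v j) {η : σ → R} {ζ : ι → R}
    (h : ∀ j < N, η ⬝ᵥ z j + ζ ⬝ᵥ v j = 0) (j : ℕ) (hj : j + Fintype.card σ < N) :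
    ∑ s ∈ range (Fintype.card σ + 1), charpolyInputCoeff F G η ζ s ⬝ᵥ v (j + s) = 0 := by
  set d := Fintype.card σ
  set a := F.charpoly.coeff
  have hstate : ∀ k ≤ d, η ⬝ᵥ z (j + k) =
      (η ᵥ* F ^ k) ⬝ᵥ z j + ∑ s ∈ range k, (η ᵥ* (F ^ (k - 1 - s) * G)) ⬝ᵥ v (j + s) := by
    intro k hk
    rw [state_eq_pow_mulVec_add_sum F G j k fun i hi => hz _ (by omega), dotProduct_add,
      dotProduct_mulVec, dotProduct_sum]
    simp only [dotProduct_mulVec]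
  have hflip : ∑ k ∈ range (d + 1),
        a k * ∑ s ∈ range k, (η ᵥ* (F ^ (k - 1 - s) * G)) ⬝ᵥ v (j + s) =
      ∑ s ∈ range (d + 1), ∑ t ∈ range (d - s),
        a (s + t + 1) * ((η ᵥ* (F ^ t * G)) ⬝ᵥ v (j + s)) := by
    rw [← sum_range_sum_range_tsub_flip]
    refine sum_congr rfl fun k _ => ?_
    rw [mul_sum]
    refine sum_congr rfl fun s hs => ?_
    rw [show s + (k - 1 - s) + 1 = k by have := mem_range.mp hs; omega]
  calc ∑ s ∈ range (d + 1), charpolyInputCoeff F G η ζ s ⬝ᵥ v (j + s)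
      = ∑ k ∈ range (d + 1), a k * ((η ᵥ* F ^ k) ⬝ᵥ z j) +
          ∑ k ∈ range (d + 1),
            a k * ∑ s ∈ range k, (η ᵥ* (F ^ (k - 1 - s) * G)) ⬝ᵥ v (j + s) +
          ∑ k ∈ range (d + 1), a k * (ζ ⬝ᵥ v (j + k)) := by
        rw [sum_charpoly_coeff_mul_vecMul_pow_dotProduct, zero_add, hflip]
        simp only [charpolyInputCoeff, add_dotProduct, smul_dotProduct, sum_dotProduct,
          sum_add_distrib, smul_eq_mul]
        exact add_comm _ _
    _ = ∑ k ∈ range (d + 1), a k * (η ⬝ᵥ z (j + k) + ζ ⬝ᵥ v (j + k)) := by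
        rw [← sum_add_distrib, ← sum_add_distrib]
        refine sum_congr rfl fun k hk => ?_
        rw [hstate k (by have := mem_range.mp hk; omega)]
        ring
    _ = 0 := sum_eq_zero fun k hk => by rw [h _ (by have := mem_range.mp hk; omega), mul_zero]

theorem eq_zero_of_forall_dotProduct_add_dotProduct_eq_zero
    (hFG : ∀ η : σ → R, (∀ k < Fintype.card σ, η ᵥ* (F ^ k * G) = 0) → η = 0)
    {N : ℕ} {z : ℕ → σ → R} {v : ℕ → ι → R}
    (hz : ∀ j, j + 1 < N → z (j + 1) = F *ᵥ z j + G *ᵥ v j)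
    (hv : ∀ c : ℕ → ι → R, (∀ j, j + Fintype.card σ < N →
      ∑ s ∈ range (Fintype.card σ + 1), c s ⬝ᵥ v (j + s) = 0) → ∀ s ≤ Fintype.card σ, c s = 0)
    {η : σ → R} {ζ : ι → R} (h : ∀ j < N, η ⬝ᵥ z j + ζ ⬝ᵥ v j = 0) : η = 0 ∧ ζ = 0 := by
  have hc := hv _ (sum_charpolyInputCoeff_dotProduct_eq_zero hz h)
  have hmonic : F.charpoly.coeff (Fintype.card σ) = 1 := by
    simpa using F.charpoly_monic.coeff_natDegree
  have hζ : ζ = 0 := by simpa [charpolyInputCoeff, hmonic] using hc _ le_rfl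
  refine ⟨hFG η (forall_eq_zero_of_sum_range_tsub_smul_eq_zero hmonic fun s hs => ?_), hζ⟩
  simpa [charpolyInputCoeff, hζ] using hc s hs.le

end FundamentalLemma

section Lifting

variable {R : Type*} [CommRing R] {σ ι : Type*} [Fintype σ] [DecidableEq σ]
  (A : Matrix σ σ R) (B : Matrix σ ι R) (L : ℕ)

/-- The input matrix `[A^{L-1}B, …, AB, B]` of the system sampled every `L` steps. -/
def liftedInputMat : Matrix σ (Fin L × ι) R :=
  of fun r p => (A ^ (L - 1 - (p.1 : ℕ)) * B) r p.2

def blockSignal {α : Type*} (ω : ℕ → ι → α) : ℕ → Fin L × ι → α :=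
  fun j p => ω (j * L + p.1) p.2

variable {A B L}

theorem state_succ_mul_eq [Fintype ι] {x : ℕ → σ → R} {u : ℕ → ι → R} {T j : ℕ}
    (hx : ∀ k < T, x (k + 1) = A *ᵥ x k + B *ᵥ u k) (hj : (j + 1) * L ≤ T) :
    x ((j + 1) * L) = A ^ L *ᵥ x (j * L) + liftedInputMat A B L *ᵥ blockSignal L u j := by
  rw [Nat.succ_mul] at hj ⊢
  rw [state_eq_pow_mulVec_add_sum A B (j * L) L fun k hk => hx _ (by omega)]
  congr 1
  ext r
  rw [← Fin.sum_univ_eq_sum_range (fun s => (A ^ (L - 1 - s) * B) *ᵥ u (j * L + s)),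
    Finset.sum_apply]
  simp only [mulVec, dotProduct, Fintype.sum_prod_type, liftedInputMat, blockSignal, of_apply]

theorem vecMul_pow_mul_eq_zero_of_lifted (hL : 0 < L) {d : ℕ} {η : σ → R}
    (h : ∀ k < d, η ᵥ* ((A ^ L) ^ k * liftedInputMat A B L) = 0) :
    ∀ k < d, η ᵥ* (A ^ k * B) = 0 := by
  intro k hk
  ext b
  have hkL := congrFun (h (k / L) ((Nat.div_le_self k L).trans_lt hk))
    (⟨L - 1 - k % L, by omega⟩, b)
  change (η ᵥ* ((A ^ L) ^ (k / L) * (A ^ (L - 1 - (L - 1 - k % L)) * B))) b = 0 at hkL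
  rwa [← Matrix.mul_assoc, ← pow_mul, ← pow_add,
    show L * (k / L) + (L - 1 - (L - 1 - k % L)) = k by
      have := Nat.div_add_mod k L; have := Nat.mod_lt k hL; omega] at hkL

end Lifting

def extendByZero {α : Type*} [Zero α] {T : ℕ} (ω : Fin T → α) : ℕ → α :=
  fun k => if h : k < T then ω ⟨k, h⟩ else 0

theorem extendByZero_of_lt {α : Type*} [Zero α] {T k : ℕ} (ω : Fin T → α) (h : k < T) :
    extendByZero ω k = ω ⟨k, h⟩ :=
  dif_pos h

theorem pageMat_eq_of_blockSignal {q : ℕ} (T : ℕ) (ω : Fin T → Fin q → ℝ) (k : ℕ) :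
    pageMat T ω k = of fun p (j : Fin (T / k)) => blockSignal k (extendByZero ω) j p := by
  ext p j
  simp only [pageMat, blockSignal, extendByZero, dite_apply, Pi.zero_apply, of_apply]

theorem pageStackMat_apply {q : ℕ} (T : ℕ) (ω : Fin T → Fin q → ℝ) (k l : ℕ) (r : Fin l)
    (p : Fin k × Fin q) (j : Fin (T / k - l + 1)) :
    pageStackMat T ω k l (r, p) j = blockSignal k (extendByZero ω) (j + r) p := by
  simp only [pageStackMat, blockSignal, extendByZero, dite_apply, Pi.zero_apply]

theorem PageExciting.succ_le_div {q T k l : ℕ} {ω : Fin T → Fin q → ℝ}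
    (h : PageExciting T ω k (l + 1)) (hq : 0 < q) (hk : 0 < k) : l + 1 ≤ T / k := by
  by_contra! hlt
  have hwidth := (pageStackMat T ω k (l + 1)).rank_le_card_width
  -- a single column: rank `q * k * (l + 1) ≤ 1` forces `q = k = 1`, `l = 0`, then `T = 0`
  rw [h, Fintype.card_fin, show T / k - (l + 1) + 1 = 1 by omega] at hwidth
  obtain ⟨⟨rfl, rfl⟩, hl⟩ : (q = 1 ∧ k = 1) ∧ l + 1 = 1 := by
    rw [← mul_eq_one, ← mul_eq_one]
    have := Nat.mul_pos (Nat.mul_pos hq hk) (show 0 < l + 1 by omega)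
    omega
  obtain rfl : l = 0 := by omega
  obtain rfl : T = 0 := by omega
  have hzero : pageStackMat 0 ω 1 1 = 0 := by
    ext r c
    simp [pageStackMat]
  simp [PageExciting, hzero] at h

theorem PageExciting.eq_zero_of_sum_dotProduct_eq_zero {q T k l : ℕ} {ω : Fin T → Fin q → ℝ}
    (h : PageExciting T ω k (l + 1)) (c : ℕ → Fin k × Fin q → ℝ)
    (hc : ∀ j, j + l < T / k →
      ∑ s ∈ range (l + 1), c s ⬝ᵥ blockSignal k (extendByZero ω) (j + s) = 0) :
    ∀ s ≤ l, c s = 0 := by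
  intro s hs
  rcases Nat.eq_zero_or_pos q with rfl | hq
  · exact funext fun p => p.2.elim0
  rcases Nat.eq_zero_or_pos k with rfl | hk
  · exact funext fun p => p.1.elim0
  have hdiv := h.succ_le_div hq hk
  set c' : Fin (l + 1) × Fin k × Fin q → ℝ := fun t => c t.1 t.2
  have hinj := (rank_eq_card_iff_vecMul_injective _).mp
    (show (pageStackMat T ω k (l + 1)).rank = Fintype.card (Fin (l + 1) × Fin k × Fin q) by
      rw [h]; simp only [Fintype.card_prod, Fintype.card_fin]; ring)
  have hc' : c' ᵥ* pageStackMat T ω k (l + 1) = 0 ᵥ* pageStackMat T ω k (l + 1) := by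
    ext j
    rw [zero_vecMul, Pi.zero_apply, ← hc j (by have := j.2; omega),
      ← Fin.sum_univ_eq_sum_range (fun s => c s ⬝ᵥ blockSignal k (extendByZero ω) (j + s))]
    simp only [vecMul, dotProduct, Fintype.sum_prod_type, pageStackMat_apply, c']
  exact funext fun p => congrFun (hinj hc') (⟨s, by omega⟩, p)

theorem Controllable.eq_zero_of_forall_vecMul_pow_mul_eq_zero {n : ℕ} {ι : Type} [Fintype ι]
    {A : Matrix (Fin n) (Fin n) ℝ} {B : Matrix (Fin n) ι ℝ} (h : Controllable A B)
    {η : Fin n → ℝ} (hη : ∀ k < n, η ᵥ* (A ^ k * B) = 0) : η = 0 := by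
  have hinj := (rank_eq_card_iff_vecMul_injective (ctrbMat A B)).mp (by rw [h, Fintype.card_fin])
  refine hinj (?_ : η ᵥ* ctrbMat A B = 0 ᵥ* ctrbMat A B)
  ext ⟨k, b⟩
  rw [zero_vecMul]
  exact congrFun (hη k k.2) b

theorem IsTraj.exists_nat {n q p L : ℕ} {A : Matrix (Fin n) (Fin n) ℝ}
    {B : Matrix (Fin n) (Fin q) ℝ} {C : Matrix (Fin p) (Fin n) ℝ}
    {u : Fin L → Fin q → ℝ} {y : Fin L → Fin p → ℝ} (h : IsTraj A B C L u y) :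
    ∃ x : ℕ → Fin n → ℝ, (∀ k < L, x (k + 1) = A *ᵥ x k + B *ᵥ extendByZero u k) ∧
      ∀ k < L, extendByZero y k = C *ᵥ x k := by
  obtain ⟨x, hx⟩ := h
  refine ⟨extendByZero x, fun k hk => ?_, fun k hk => ?_⟩
  · simpa [extendByZero, hk, hk.le] using (hx ⟨k, hk⟩).1
  · simpa [extendByZero, hk, Nat.lt_succ_of_lt hk] using (hx ⟨k, hk⟩).2

theorem rank_fromRows_states_pageMat {n q T L : ℕ} {A : Matrix (Fin n) (Fin n) ℝ}
    {B : Matrix (Fin n) (Fin q) ℝ} (hctrb : Controllable A B) (hL : 1 ≤ L)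
    {ud : Fin T → Fin q → ℝ} (hexc : PageExciting T ud L (n + 1)) {xd : ℕ → Fin n → ℝ}
    (hxd : ∀ k < T, xd (k + 1) = A *ᵥ xd k + B *ᵥ extendByZero ud k) :
    (fromRows (of fun i (j : Fin (T / L)) => xd (j * L) i) (pageMat T ud L)).rank =
      Fintype.card (Fin n ⊕ Fin L × Fin q) := by
  rw [rank_eq_card_iff_vecMul_injective, ← coe_vecMulLinear, injective_iff_map_eq_zero]
  intro w hw
  have hcol : ∀ j < T / L,
      (w ∘ Sum.inl) ⬝ᵥ xd (j * L) + (w ∘ Sum.inr) ⬝ᵥ blockSignal L (extendByZero ud) j = 0 :=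
    fun j hj => by
      simpa [vecMul_fromRows, pageMat_eq_of_blockSignal, vecMul, dotProduct] using
        congrFun hw ⟨j, hj⟩
  obtain ⟨hη, hζ⟩ := eq_zero_of_forall_dotProduct_add_dotProduct_eq_zero (F := A ^ L)
    (fun η hη => hctrb.eq_zero_of_forall_vecMul_pow_mul_eq_zero
      (vecMul_pow_mul_eq_zero_of_lifted hL (by simpa using hη)))
    (fun j hj => state_succ_mul_eq hxd ((Nat.le_div_iff_mul_le hL).mp hj.le))
    (by simpa using hexc.eq_zero_of_sum_dotProduct_eq_zero) hcol
  rw [← Sum.elim_comp_inl_inr w, hη, hζ]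
  exact Sum.elim_zero_zero

theorem pageMat_mulVec_eq_colVec_of_state_input {n q p T L : ℕ} {A : Matrix (Fin n) (Fin n) ℝ}
    {B : Matrix (Fin n) (Fin q) ℝ} {C : Matrix (Fin p) (Fin n) ℝ}
    {ud : Fin T → Fin q → ℝ} {yd : Fin T → Fin p → ℝ} {xd : ℕ → Fin n → ℝ}
    (hxd : ∀ k < T, xd (k + 1) = A *ᵥ xd k + B *ᵥ extendByZero ud k)
    (hyd : ∀ k < T, extendByZero yd k = C *ᵥ xd k)
    {u : Fin L → Fin q → ℝ} {y : Fin L → Fin p → ℝ} {x : ℕ → Fin n → ℝ}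
    (hx : ∀ k < L, x (k + 1) = A *ᵥ x k + B *ᵥ extendByZero u k)
    (hy : ∀ k < L, extendByZero y k = C *ᵥ x k) {g : Fin (T / L) → ℝ}
    (hgx : ∑ j, g j • xd (j * L) = x 0) (hgu : pageMat T ud L *ᵥ g = colVec u) :
    pageMat T yd L *ᵥ g = colVec y := by
  have hidx : ∀ j : Fin (T / L), ∀ k < L, j * L + k < T :=
    fun j k hk => Nat.mul_add_lt_of_lt_div j.2 hk
  rw [pageMat_eq_of_blockSignal, of_mulVec_eq_sum_smul] at hgu ⊢
  have hstate := sum_smul_eq_of_recursion A B g (xs := fun j k => xd (j * L + k))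
    (fun j k hk => hxd _ (hidx j k hk)) hx (by simpa using hgx) fun k hk => by
      ext b
      rw [extendByZero_of_lt u hk]
      simpa [blockSignal, Finset.sum_apply, colVec] using congrFun hgu (⟨k, hk⟩, b)
  have hout : ∀ i : Fin L, ∑ j, g j • extendByZero yd (j * L + i) = y i := fun i => by
    rw [sum_congr rfl fun j _ => by rw [hyd _ (hidx j i i.2), ← mulVec_smul], ← mulVec_sum,
      hstate i i.2.le, ← hy i i.2, extendByZero_of_lt y i.2]
  ext ⟨i, b⟩
  simpa [blockSignal, Finset.sum_apply, colVec] using congrFun (hout i) b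

/-- Willems' fundamental lemma, Page matrix version.
If `(A, B)` is controllable, `(u^d, y^d)` is a length-`T` trajectory of the system,
`1 ≤ L`, and `u^d` is `L`-Page exciting of order `n + 1`, then every length-`L`
trajectory `(u, y)` of the system can be constructed as `𝓟_L(u^d) g = col(u)`,
`𝓟_L(y^d) g = col(y)` for some `g ∈ ℝ^{⌊T/L⌋}`. -/
theorem stmt1 {n q p T : ℕ}
    (A : Matrix (Fin n) (Fin n) ℝ) (B : Matrix (Fin n) (Fin q) ℝ)
    (C : Matrix (Fin p) (Fin n) ℝ)
    (hctrb : Controllable A B)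
    (ud : Fin T → Fin q → ℝ) (yd : Fin T → Fin p → ℝ)
    (hd : IsTraj A B C T ud yd)
    (L : ℕ) (hL : 1 ≤ L)
    (hexc : PageExciting T ud L (n + 1)) :
    ∀ (u : Fin L → Fin q → ℝ) (y : Fin L → Fin p → ℝ),
      IsTraj A B C L u y →
      ∃ g : Fin (T / L) → ℝ,
        pageMat T ud L *ᵥ g = colVec u ∧ pageMat T yd L *ᵥ g = colVec y := by
  intro u y hu
  obtain ⟨xd, hxd, hyd⟩ := hd.exists_nat
  obtain ⟨x, hx, hy⟩ := hu.exists_nat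
  obtain ⟨g, hg⟩ := mulVec_surjective_of_rank_eq _ (rank_fromRows_states_pageMat hctrb hL hexc hxd)
    (Sum.elim (x 0) (colVec u))
  rw [fromRows_mulVec, of_mulVec_eq_sum_smul] at hg
  obtain ⟨hgx, hgu⟩ : ∑ j, g j • xd (j * L) = x 0 ∧ pageMat T ud L *ᵥ g = colVec u :=
    ⟨congrArg (· ∘ Sum.inl) hg, congrArg (· ∘ Sum.inr) hg⟩
  exact ⟨g, hgu, pageMat_mulVec_eq_colVec_of_state_input hxd hyd hx hy hgx hgu⟩
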